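/- Let α > 0 be a real number. Then for every n ≥ 1, ∑_{T plane tree, |T|=n} ( ∏_{v∈T} C(α−1+d(v), d(v)) ) · ( n! / ∏_{v∈T} h_v ) = (α+1)^{n-1} · (n−1)! · C(n−1−1/(α+1), n−1), where C(x,k) = x(x−1)⋯(x−k+1)/k! denotes the generalized binomial coefficient for real x and natural k. -/

import Mathlib

/-- A plane tree (ordered rooted tree): a root together with a finite
sequence of plane trees (its root subtrees). -/
inductive PlaneTree : Type where
  | node : List PlaneTree → PlaneTree

namespace PlaneTree

/-- The size of a plane tree: its number of vertices. -/
def size : PlaneTree → ℕ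
  | node ts => 1 + (ts.attach.map fun t => size t.1).sum
decreasing_by simp only [PlaneTree.node.sizeOf_spec]; have := List.sizeOf_lt_of_mem t.2; omega

/-- The degree weight `w_deg(T) = ∏_{v ∈ T} φ_{d(v)}`, where `d(v)` is the
out-degree of the vertex `v`. -/
noncomputable def degWeight (φ : ℕ → ℝ) : PlaneTree → ℝ
  | node ts => φ ts.length * (ts.attach.map fun t => degWeight φ t.1).prod
decreasing_by simp only [PlaneTree.node.sizeOf_spec]; have := List.sizeOf_lt_of_mem t.2; omega

/-- The hook weight `w_h(T) = ∏_{v ∈ T} ρ(h_v)`, where the hook length `h_v`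
is the number of vertices of the subtree of `T` rooted at `v`. -/
noncomputable def hookWeight (ρ : ℕ → ℝ) : PlaneTree → ℝ
  | node ts => ρ (size (node ts)) * (ts.attach.map fun t => hookWeight ρ t.1).prod
decreasing_by simp only [PlaneTree.node.sizeOf_spec]; have := List.sizeOf_lt_of_mem t.2; omega

end PlaneTree

namespace PlaneTree

/-- The product `∏_{v ∈ T} h_v` of all hook lengths of a plane tree. -/
def hookProd : PlaneTree → ℕ
  | node ts => size (node ts) * (ts.attach.map fun t => hookProd t.1).prod
decreasing_by simp only [PlaneTree.node.sizeOf_spec]; have := List.sizeOf_lt_of_mem t.2; omega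

end PlaneTree

/-- The generalized binomial coefficient `C(x,k) = x(x−1)⋯(x−k+1)/k!` for real `x`. -/
noncomputable def genBinom (x : ℝ) (k : ℕ) : ℝ :=
  (∏ i ∈ Finset.range k, (x - i)) / Nat.factorial k

/-!
Weight a plane tree `T` by `w(T) = ∏ φ_{d(v)} / ∏ h_v` with `φ_k = C(α - 1 + k, k)`, so that the
left-hand side is `n! [xⁿ] Y` for `Y = ∑_T w(T) x^|T|`. Deleting the root of a tree of size `n + 1`
leaves a forest of total size `n`, and the root's hook is `n + 1`; hence `Y' = φ(Y)` with
`φ(t) = ∑ φ_k tᵏ = (1 - t)^(-α)`, and `Y(0) = 0` determines `Y`.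

The series `y = 1 - (1 - (α + 1) x)^(1 / (α + 1))` satisfies `(1 - (α + 1) x) y' = 1 - y`.
Since `(1 - t) φ'(t) = α φ(t)`, both `y'` and `φ(y)` solve `(1 - (α + 1) x) f' = α f`, `f(0) = 1`,
so `y' = φ(y)` and `Y = y`. The recurrence `(n + 1) y_{n+1} = ((α + 1) n - 1) y_n` then gives
the closed form.
-/

open Finset PowerSeries

lemma List.finite_setOf_length_le_forall_mem {α : Type*} {s : Set α} (hs : s.Finite) (n : ℕ) :
    {l : List α | l.length ≤ n ∧ ∀ a ∈ l, a ∈ s}.Finite := by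
  have := hs.to_subtype
  refine ((List.finite_length_le s n).image (List.map Subtype.val)).subset ?_
  rintro l ⟨hlen, hmem⟩
  exact ⟨l.attach.map fun a => ⟨a.1, hmem _ a.2⟩, by simpa using hlen, by simp⟩

lemma List.prod_map_div {ι M : Type*} [DivisionCommMonoid M] (l : List ι) (f g : ι → M) :
    (l.map fun i => f i / g i).prod = (l.map f).prod / (l.map g).prod := by
  simpa using Multiset.prod_map_div (m := (l : Multiset ι)) (f := f) (g := g)

namespace PowerSeries

lemma coeff_pow_eq_zero_of_lt {R : Type*} [CommSemiring R] {f : R⟦X⟧} (hf : constantCoeff f = 0)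
    {m k : ℕ} (hm : m < k) : coeff m (f ^ k) = 0 :=
  coeff_of_lt_order m ((Nat.cast_lt.2 hm).trans_le (le_order_pow_of_constantCoeff_eq_zero k hf))

lemma coeff_X_mul_derivative {R : Type*} [CommSemiring R] (f : R⟦X⟧) (n : ℕ) :
    coeff n (X * d⁄dX R f) = n * coeff n f := by
  cases n with
  | zero => simp [coeff_zero_eq_constantCoeff]
  | succ n => rw [coeff_succ_X_mul, coeff_derivative]; push_cast; ring

lemma coeff_one_sub_C_mul_X_mul_derivative {R : Type*} [CommRing R] (c : R) (f : R⟦X⟧) (n : ℕ) :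
    coeff n ((1 - C c * X) * d⁄dX R f) = (n + 1) * coeff (n + 1) f - c * n * coeff n f := by
  rw [sub_mul, one_mul, mul_assoc, map_sub, coeff_C_mul, coeff_X_mul_derivative, coeff_derivative]
  ring

-- `f' = φ(f)` coefficientwise; when `constantCoeff f = 0` only the powers `f ^ k` with `k ≤ n`
-- contribute to the `n`-th coefficient of `φ(f)`.
def DerivEqComp (φ : ℕ → ℝ) (f : ℝ⟦X⟧) : Prop :=
  ∀ n, coeff n (d⁄dX ℝ f) = ∑ k ∈ range (n + 1), φ k * coeff n (f ^ k)

lemma coeff_pow_eq_of_trunc_eq {R : Type*} [CommSemiring R] {f g : R⟦X⟧} {n : ℕ}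
    (h : trunc (n + 1) f = trunc (n + 1) g) (k : ℕ) : coeff n (f ^ k) = coeff n (g ^ k) := by
  have hcoeff (p : R⟦X⟧) :
      coeff n (p ^ k) = (trunc (n + 1) ((trunc (n + 1) p : R⟦X⟧) ^ k)).coeff n := by
    rw [trunc_trunc_pow, coeff_trunc, if_pos n.lt_succ_self]
  rw [hcoeff, h, ← hcoeff]

lemma DerivEqComp.eq {φ : ℕ → ℝ} {f g : ℝ⟦X⟧} (hf : DerivEqComp φ f) (hg : DerivEqComp φ g)
    (h0 : constantCoeff f = constantCoeff g) : f = g := by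
  suffices ∀ n, trunc n f = trunc n g by
    ext n
    simpa [coeff_trunc] using congr_arg (Polynomial.coeff · n) (this (n + 1))
  intro n
  induction n with
  | zero => rfl
  | succ n ih =>
    rw [trunc_succ, trunc_succ, ih]
    congr 2
    cases n with
    | zero => simpa using h0
    | succ n =>
      have hder : coeff n (d⁄dX ℝ f) = coeff n (d⁄dX ℝ g) := by
        simp only [hf n, hg n, coeff_pow_eq_of_trunc_eq ih]
      rw [coeff_derivative, coeff_derivative] at hder
      exact mul_right_cancel₀ (by positivity) hder

-- By the chain rule and `U Y' = 1 - Y`, the left side is `((1 - t) φ_M')(Y)` for the truncation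
-- `φ_M = ∑_{k ≤ M} φ_k tᵏ` of `(1 - t)^(-α)`, whose untruncated form satisfies `(1 - t) φ' = α φ`.
lemma mul_derivative_sum_C_mul_pow {α : ℝ} {φ : ℕ → ℝ}
    (hφ : ∀ k : ℕ, (k + 1) * φ (k + 1) = (α + k) * φ k) {U Y : ℝ⟦X⟧}
    (hY : U * d⁄dX ℝ Y = 1 - Y) (M : ℕ) :
    U * d⁄dX ℝ (∑ k ∈ range (M + 1), C (φ k) * Y ^ k) =
      C α * ∑ k ∈ range (M + 1), C (φ k) * Y ^ k - C ((α + M) * φ M) * Y ^ M := by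
  induction M with
  | zero => simp
  | succ M ih =>
    have hφM := congr_arg C (hφ M)
    simp only [map_mul, map_add, map_natCast, map_one] at hφM
    rw [sum_range_succ, map_add, mul_add, ih, Derivation.leibniz, derivative_C, smul_zero,
      add_zero, derivative_pow, smul_eq_mul]
    simp only [map_mul, map_add, map_natCast, map_one, Nat.cast_add, Nat.cast_one,
      Nat.add_sub_cancel]
    linear_combination ((M + 1) * C (φ (M + 1)) * Y ^ M) * hY + Y ^ M * hφM


end PowerSeries

namespace PlaneTree

lemma size_node (ts : List PlaneTree) : (node ts).size = 1 + (ts.map size).sum := by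
  simp [size]

lemma degWeight_node (φ : ℕ → ℝ) (ts : List PlaneTree) :
    (node ts).degWeight φ = φ ts.length * (ts.map (degWeight φ)).prod := by
  simp [degWeight]

lemma hookProd_node (ts : List PlaneTree) :
    (node ts).hookProd = (node ts).size * (ts.map hookProd).prod := by
  rw [hookProd]; simp

lemma one_le_size (T : PlaneTree) : 1 ≤ T.size := by
  cases T with | node ts => rw [size_node]; omega

lemma length_le_sum_size (ts : List PlaneTree) : ts.length ≤ (ts.map size).sum := by
  simpa using List.length_le_sum_of_one_le (ts.map size) (by simpa using fun t _ => one_le_size t)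

lemma finite_setOf_size_le (n : ℕ) : {T : PlaneTree | T.size ≤ n}.Finite := by
  induction n with
  | zero =>
    exact Set.finite_empty.subset fun T (hT : T.size ≤ 0) => absurd (one_le_size T) (by omega)
  | succ n ih =>
    refine ((List.finite_setOf_length_le_forall_mem ih n).image node).subset ?_
    rintro ⟨ts⟩ hT
    have hsum : (ts.map size).sum ≤ n := by rw [Set.mem_ofPred_eq, size_node] at hT; omega
    exact ⟨ts, ⟨(length_le_sum_size ts).trans hsum,
      fun t ht => (List.le_sum_of_mem (List.mem_map_of_mem ht)).trans hsum⟩, rfl⟩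

lemma finite_setOf_sum_size_eq (m : ℕ) :
    {ts : List PlaneTree | (ts.map size).sum = m}.Finite := by
  refine (List.finite_setOf_length_le_forall_mem (finite_setOf_size_le m) m).subset ?_
  rintro ts rfl
  exact ⟨length_le_sum_size ts, fun t ht => List.le_sum_of_mem (List.mem_map_of_mem (f := size) ht)⟩

noncomputable instance (n : ℕ) : Fintype {T : PlaneTree // T.size = n} :=
  ((finite_setOf_size_le n).subset fun _ h => h.le).fintype

noncomputable instance (m : ℕ) : Fintype {ts : List PlaneTree // (ts.map size).sum = m} :=
  (finite_setOf_sum_size_eq m).fintype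

noncomputable instance (m k : ℕ) :
    Fintype {ts : List PlaneTree // ts.length = k ∧ (ts.map size).sum = m} :=
  ((finite_setOf_sum_size_eq m).subset fun _ h => h.2).fintype

section Weight

variable (φ : ℕ → ℝ)

noncomputable def weight (T : PlaneTree) : ℝ := T.degWeight φ / T.hookProd

lemma weight_node (ts : List PlaneTree) :
    weight φ (node ts) = φ ts.length * (ts.map (weight φ)).prod / (node ts).size := by
  unfold weight
  rw [degWeight_node, hookProd_node, List.prod_map_div]
  push_cast [Nat.cast_list_prod, List.map_map, Function.comp_def]
  ring

noncomputable def weightSum (n : ℕ) : ℝ := ∑ T : {T : PlaneTree // T.size = n}, weight φ T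

noncomputable def forestWeightSum (m k : ℕ) : ℝ :=
  ∑ ts : {ts : List PlaneTree // ts.length = k ∧ (ts.map size).sum = m}, (ts.1.map (weight φ)).prod

noncomputable def weightSeries : ℝ⟦X⟧ := mk (weightSum φ)

def consEquiv (m k : ℕ) :
    (Σ p : antidiagonal m, {t : PlaneTree // t.size = p.1.1} ×
        {ts : List PlaneTree // ts.length = k ∧ (ts.map size).sum = p.1.2}) ≃
      {ts : List PlaneTree // ts.length = k + 1 ∧ (ts.map size).sum = m} where
  toFun x := ⟨x.2.1 :: x.2.2, by
    simp [x.2.1.2, x.2.2.2.1, x.2.2.2.2, HasAntidiagonal.mem_antidiagonal.1 x.1.2]⟩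
  invFun
    | ⟨[], h⟩ => absurd h.1 (by simp)
    | ⟨t :: ts, h⟩ => ⟨⟨(t.size, (ts.map size).sum), by simpa using h.2⟩, ⟨t, rfl⟩,
        ⟨ts, by simpa using h.1, rfl⟩⟩
  left_inv := by
    rintro ⟨⟨⟨a, b⟩, hab⟩, ⟨t, ht⟩, ⟨ts, hlen, hsum⟩⟩
    simp only at ht hsum
    subst ht hsum
    rfl
  right_inv := by
    rintro ⟨_ | ⟨t, ts⟩, h⟩
    · exact absurd h.1 (by simp)
    · rfl

lemma forestWeightSum_succ (m k : ℕ) :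
    forestWeightSum φ m (k + 1) =
      ∑ p ∈ antidiagonal m, weightSum φ p.1 * forestWeightSum φ p.2 k := by
  rw [forestWeightSum, ← (consEquiv m k).sum_comp, Fintype.sum_sigma,
    ← Finset.sum_coe_sort (antidiagonal m)]
  refine Finset.sum_congr rfl fun p _ => ?_
  simp [consEquiv, weightSum, forestWeightSum, Finset.sum_mul_sum, Fintype.sum_prod_type]

lemma forestWeightSum_eq_coeff_pow (m k : ℕ) :
    forestWeightSum φ m k = coeff m (weightSeries φ ^ k) := by
  induction k generalizing m with
  | zero =>
    have eq_nil (ts : {ts : List PlaneTree // ts.length = 0 ∧ (ts.map size).sum = m}) :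
        ts.1 = [] :=
      List.length_eq_zero_iff.1 ts.2.1
    rw [pow_zero, coeff_one, forestWeightSum]
    split_ifs with hm
    · subst hm
      rw [Fintype.sum_eq_single ⟨[], rfl, rfl⟩
        fun ts hts => absurd (Subtype.ext (eq_nil ts)) hts]
      rfl
    · refine Finset.sum_eq_zero fun ts _ => absurd ts.2.2 ?_
      simpa [eq_nil ts] using Ne.symm hm
  | succ k ih =>
    simp only [forestWeightSum_succ, ih, pow_succ', coeff_mul, weightSeries, coeff_mk]

def nodeEquiv (n : ℕ) :
    {ts : List PlaneTree // (ts.map size).sum = n} ≃ {T : PlaneTree // T.size = n + 1} where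
  toFun ts := ⟨node ts.1, by rw [size_node, ts.2]; omega⟩
  invFun
    | ⟨node ts, h⟩ => ⟨ts, by rw [size_node] at h; omega⟩
  left_inv _ := rfl
  right_inv := by rintro ⟨⟨ts⟩, h⟩; rfl

def lengthEquiv (n : ℕ) :
    (Σ k : range (n + 1), {ts : List PlaneTree // ts.length = k ∧ (ts.map size).sum = n}) ≃
      {ts : List PlaneTree // (ts.map size).sum = n} where
  toFun x := ⟨x.2.1, x.2.2.2⟩
  invFun ts := ⟨⟨ts.1.length, by
    simpa [Nat.lt_succ_iff, ts.2] using length_le_sum_size ts.1⟩,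
    ⟨ts.1, rfl, ts.2⟩⟩
  left_inv := by
    rintro ⟨⟨k, hk⟩, ⟨ts, hlen, hsum⟩⟩
    simp only at hlen
    subst hlen
    rfl
  right_inv _ := rfl

lemma succ_mul_weightSum_succ (n : ℕ) :
    (n + 1) * weightSum φ (n + 1) = ∑ k ∈ range (n + 1), φ k * forestWeightSum φ n k := by
  have root (ts : {ts : List PlaneTree // (ts.map size).sum = n}) :
      (n + 1) * weight φ (nodeEquiv n ts) = φ ts.1.length * (ts.1.map (weight φ)).prod := by
    have hsize : ((node ts.1).size : ℝ) = n + 1 := by rw [size_node, ts.2]; push_cast; ring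
    rw [nodeEquiv, Equiv.coe_fn_mk, weight_node, hsize]
    field_simp
  rw [weightSum, ← (nodeEquiv n).sum_comp, Finset.mul_sum, Fintype.sum_congr _ _ root,
    ← (lengthEquiv n).sum_comp, Fintype.sum_sigma, ← Finset.sum_coe_sort (range (n + 1))]
  refine Finset.sum_congr rfl fun k _ => ?_
  rw [forestWeightSum, Finset.mul_sum]
  exact Finset.sum_congr rfl fun ts _ => by
    show φ ts.1.length * _ = _
    rw [ts.2.1]
    rfl

lemma derivEqComp_weightSeries : DerivEqComp φ (weightSeries φ) := by
  intro n
  rw [coeff_derivative, weightSeries, coeff_mk, mul_comm]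
  simp [succ_mul_weightSum_succ, forestWeightSum_eq_coeff_pow, weightSeries]

end Weight

end PlaneTree

-- Coefficients of `1 - (1 - (α + 1) x) ^ (1 / (α + 1))`, defined through their recurrence.
noncomputable def solCoeff (α : ℝ) : ℕ → ℝ
  | 0 => 0
  | 1 => 1
  | n + 2 => ((α + 1) * (n + 1) - 1) / (n + 2) * solCoeff α (n + 1)

lemma solCoeff_succ_succ (α : ℝ) (n : ℕ) :
    (n + 2) * solCoeff α (n + 2) = ((α + 1) * (n + 1) - 1) * solCoeff α (n + 1) := by
  rw [solCoeff]
  field_simp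

noncomputable def solSeries (α : ℝ) : ℝ⟦X⟧ := mk (solCoeff α)

lemma constantCoeff_solSeries (α : ℝ) : constantCoeff (solSeries α) = 0 := by
  simp [solSeries, solCoeff]

lemma one_sub_mul_derivative_solSeries (α : ℝ) :
    (1 - C (α + 1) * X) * d⁄dX ℝ (solSeries α) = 1 - solSeries α := by
  ext n
  rw [coeff_one_sub_C_mul_X_mul_derivative, map_sub, coeff_one]
  simp only [solSeries, coeff_mk]
  rcases n with _ | n
  · simp [solCoeff]
  · push_cast
    linear_combination solCoeff_succ_succ α n

lemma coeff_sum_C_mul_pow_solSeries {α : ℝ} {φ : ℕ → ℝ} (hφ0 : φ 0 = 1)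
    (hφ : ∀ k : ℕ, (k + 1) * φ (k + 1) = (α + k) * φ k) {m M : ℕ} (hm : m ≤ M) :
    coeff m (∑ k ∈ range (M + 1), C (φ k) * solSeries α ^ k) = (m + 1) * solCoeff α (m + 1) := by
  induction m with
  | zero =>
    simp [coeff_zero_eq_constantCoeff, constantCoeff_solSeries α, zero_pow_eq, hφ0, solCoeff]
  | succ m ih =>
    have hode := congr_arg (coeff m)
      (mul_derivative_sum_C_mul_pow hφ (one_sub_mul_derivative_solSeries α) M)
    rw [coeff_one_sub_C_mul_X_mul_derivative, map_sub, coeff_C_mul, coeff_C_mul,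
      coeff_pow_eq_zero_of_lt (constantCoeff_solSeries α) (by omega), ih (by omega)] at hode
    refine mul_left_cancel₀ (Nat.cast_add_one_ne_zero m) ?_
    push_cast
    linear_combination hode - (m + 1) * solCoeff_succ_succ α m

lemma derivEqComp_solSeries {α : ℝ} {φ : ℕ → ℝ} (hφ0 : φ 0 = 1)
    (hφ : ∀ k : ℕ, (k + 1) * φ (k + 1) = (α + k) * φ k) : DerivEqComp φ (solSeries α) := by
  intro n
  rw [coeff_derivative, solSeries, coeff_mk, mul_comm, ← solSeries,
    ← coeff_sum_C_mul_pow_solSeries hφ0 hφ le_rfl, map_sum]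
  simp only [coeff_C_mul]

namespace PlaneTree

lemma weightSum_zero (φ : ℕ → ℝ) : weightSum φ 0 = 0 :=
  Finset.sum_eq_zero fun T _ => absurd T.2 (Nat.one_le_iff_ne_zero.1 (one_le_size T.1))

lemma weightSum_eq_solCoeff {α : ℝ} {φ : ℕ → ℝ} (hφ0 : φ 0 = 1)
    (hφ : ∀ k : ℕ, (k + 1) * φ (k + 1) = (α + k) * φ k) (n : ℕ) :
    weightSum φ n = solCoeff α n := by
  have h := (derivEqComp_weightSeries φ).eq (derivEqComp_solSeries hφ0 hφ) (by
    simp [weightSeries, constantCoeff_solSeries, weightSum_zero])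
  simpa [weightSeries, solSeries] using congr_arg (coeff n) h

end PlaneTree

lemma genBinom_succ_succ_mul (x : ℝ) (k : ℕ) :
    genBinom (x + 1) (k + 1) * (k + 1) = (x + 1) * genBinom x k := by
  have hprod : ∏ i ∈ range k, (x + 1 - ((i + 1 : ℕ) : ℝ)) = ∏ i ∈ range k, (x - i) :=
    prod_congr rfl fun i _ => by push_cast; ring
  rw [genBinom, genBinom, prod_range_succ', hprod, Nat.factorial_succ]
  push_cast
  field_simp
  ring

lemma factorial_mul_solCoeff {α : ℝ} (hα : α + 1 ≠ 0) (n : ℕ) :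
    ((n + 1).factorial : ℝ) * solCoeff α (n + 1) =
      (α + 1) ^ n * n.factorial * genBinom (n - 1 / (α + 1)) n := by
  induction n with
  | zero => simp [solCoeff, genBinom]
  | succ n ih =>
    have hbinom := genBinom_succ_succ_mul (n - 1 / (α + 1)) n
    have hinv : (α + 1) * (1 / (α + 1)) = 1 := mul_one_div_cancel hα
    calc ((n + 2).factorial : ℝ) * solCoeff α (n + 2)
        = (n + 1).factorial * ((n + 2) * solCoeff α (n + 2)) := by
          push_cast [Nat.factorial_succ]; ring
      _ = ((α + 1) * (n + 1) - 1) * ((n + 1).factorial * solCoeff α (n + 1)) := by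
          rw [solCoeff_succ_succ]; ring
      _ = _ := by
          rw [ih]
          push_cast [Nat.factorial_succ]
          rw [show (n : ℝ) + 1 - 1 / (α + 1) = n - 1 / (α + 1) + 1 by ring]
          linear_combination (-(α + 1) ^ (n + 1) * n.factorial) * hbinom
            + ((α + 1) ^ n * n.factorial * genBinom (n - 1 / (α + 1)) n) * hinv

/-- **Hook length identity for `φ(t) = 1/(1−t)^α` increasing trees.** For `α > 0`
and every `n ≥ 1`,
`∑_{|T|=n} (∏_{v∈T} C(α−1+d(v), d(v))) · n!/∏_{v∈T} h_v
  = (α+1)^{n-1}(n−1)! C(n−1−1/(α+1), n−1)`. -/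
theorem hook_length_identity_ged
    (α : ℝ) (hα : 0 < α) (n : ℕ) (hn : 1 ≤ n) :
    ∑' T : {T : PlaneTree // T.size = n},
        T.1.degWeight (fun k => genBinom (α - 1 + k) k)
          * ((Nat.factorial n : ℝ) / (T.1.hookProd : ℝ))
      = (α + 1) ^ (n - 1) * (Nat.factorial (n - 1) : ℝ)
          * genBinom ((n : ℝ) - 1 - 1 / (α + 1)) (n - 1) := by
  obtain ⟨n, rfl⟩ := Nat.exists_eq_add_of_le' hn
  have hφ (k : ℕ) : ((k : ℝ) + 1) * genBinom (α - 1 + (k + 1 : ℕ)) (k + 1) =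
      (α + k) * genBinom (α - 1 + k) k := by
    rw [mul_comm, Nat.cast_succ, ← add_assoc, genBinom_succ_succ_mul]
    ring
  calc _ = ((n + 1).factorial : ℝ) *
        PlaneTree.weightSum (fun k => genBinom (α - 1 + k) k) (n + 1) := by
        rw [tsum_fintype, PlaneTree.weightSum, mul_sum]
        exact sum_congr rfl fun T _ => by rw [PlaneTree.weight]; ring
    _ = ((n + 1).factorial : ℝ) * solCoeff α (n + 1) := by
        rw [PlaneTree.weightSum_eq_solCoeff (by simp [genBinom]) hφ]
    _ = _ := by
        rw [factorial_mul_solCoeff (by positivity)]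
        simp
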